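/- Suppose the cost norm is the Euclidean norm ‖·‖ = ‖·‖₂ and the margin assumption holds with optimal classifier (y_*,b_*). Then for every t ≥ 1 the Algorithm 2 iterates satisfy y_*^⊤ z_t ≥ 0 and y_*^⊤ y_t ≥ 0; equivalently, y_*^⊤ v(y_t) ≥ 0. -/
import Mathlib


noncomputable section
open scoped Classical
open scoped RealInnerProductSpace

/-- Feature space: `ℝ^d` with the Euclidean (`ℓ₂`) norm, which is self-dual. -/
abbrev E (d : ℕ) : Type := EuclideanSpace ℝ (Fin d)

/-- Sign function with the convention `sgn 0 = +1`. -/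
def sgn (t : ℝ) : ℝ := if 0 ≤ t then 1 else -1

/-- The selection map for the Euclidean norm: `v(y) = y/‖y‖₂`, `v(0) = 0`. -/
def vE {d : ℕ} (y : E d) : E d := ‖y‖⁻¹ • y

/-- Predicted label `p̂(x,y,b) = sgn(⟪y,x⟫ + b - 2‖y‖₂/c)`. -/
def predE {d : ℕ} (c : ℝ) (x y : E d) (b : ℝ) : ℝ :=
  sgn (⟪y, x⟫ + b - 2 * ‖y‖ / c)

/-- Agent response `r(A,y,b)` for `ℓ₂`-norm costs. -/
def respE {d : ℕ} (c : ℝ) (A y : E d) (b : ℝ) : E d :=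
  if y ≠ 0 ∧ 0 ≤ (⟪y, A⟫ + b) / ‖y‖ ∧ (⟪y, A⟫ + b) / ‖y‖ < 2 / c
  then A + (2 / c - (⟪y, A⟫ + b) / ‖y‖) • vE y
  else A

/-- Proxy point `s(A,y,b)` for `ℓ₂`-norm costs. -/
def proxyE {d : ℕ} (lbl : E d → ℝ) (c : ℝ) (A y : E d) (b : ℝ) : E d :=
  if y ≠ 0 ∧ 0 ≤ (⟪y, A⟫ + b) / ‖y‖ ∧ (⟪y, A⟫ + b) / ‖y‖ < 2 / c ∧ lbl A = -1
  then A - ((⟪y, A⟫ + b) / ‖y‖) • vE y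
  else respE c A y b

/-- Margin function `h(y,b;S⁺,S⁻)`. -/
def marginFn {d : ℕ} (Sp Sm : Set (E d)) (y : E d) (b : ℝ) : ℝ :=
  min (sInf ((fun x => ⟪y, x⟫ + b) '' Sp)) (sInf ((fun x => -⟪y, x⟫ - b) '' Sm))

/-- Euclidean projection onto the unit `ℓ₂`-ball. -/
def projB {d : ℕ} (w : E d) : E d := if ‖w‖ ≤ 1 then w else ‖w‖⁻¹ • w


lemma vE_inner_nonneg {d : ℕ} (u y : E d) (h : 0 ≤ ⟪u, y⟫) : 0 ≤ ⟪u, vE y⟫ := by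
  unfold vE
  rw [real_inner_smul_right]
  exact mul_nonneg (inv_nonneg.2 (norm_nonneg _)) h

lemma projB_inner_nonneg {d : ℕ} (u w : E d) (h : 0 ≤ ⟪u, w⟫) : 0 ≤ ⟪u, projB w⟫ := by
  unfold projB
  split
  · exact h
  · rw [real_inner_smul_right]
    exact mul_nonneg (inv_nonneg.2 (norm_nonneg _)) h

lemma inner_proxy_ge {d : ℕ} (lbl : E d → ℝ) (c : ℝ) (u A y : E d) (b : ℝ)
    (hv : 0 ≤ ⟪u, vE y⟫) (hA : lbl A = 1) :
    ⟪u, A⟫ ≤ ⟪u, proxyE lbl c A y b⟫ := by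
  unfold proxyE
  rw [if_neg (by rintro ⟨-, -, -, h⟩; rw [hA] at h; norm_num at h)]
  unfold respE
  split
  · rename_i hcond
    rw [inner_add_right, real_inner_smul_right]
    have h0 : (0:ℝ) ≤ 2 / c - (⟪y, A⟫ + b) / ‖y‖ := by linarith [hcond.2.2]
    nlinarith [mul_nonneg h0 hv]
  · exact le_rfl

lemma inner_proxy_le {d : ℕ} (lbl : E d → ℝ) (c : ℝ) (u A y : E d) (b : ℝ)
    (hv : 0 ≤ ⟪u, vE y⟫) (hA : lbl A = -1) :
    ⟪u, proxyE lbl c A y b⟫ ≤ ⟪u, A⟫ := by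
  unfold proxyE
  split
  · rename_i hcond
    rw [inner_sub_right, real_inner_smul_right]
    nlinarith [mul_nonneg hcond.2.1 hv]
  · rename_i hcond
    unfold respE
    rw [if_neg (fun h2 => hcond ⟨h2.1, h2.2.1, h2.2.2, hA⟩)]


/-- Lemma `subgrad-averaging-positive-inner-product`: for
`ℓ₂`-norm costs under the margin assumption, all Algorithm 2 iterates satisfy
`⟪y_*, z_t⟫ ≥ 0` and `⟪y_*, y_t⟫ ≥ 0` (equivalently `⟪y_*, v(y_t)⟫ ≥ 0`). -/
theorem alg2_alignment
    {d : ℕ} (hd : 1 ≤ d)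
    (c : ℝ) (hc : 0 < c)
    (lbl : E d → ℝ) (hlbl : ∀ A : E d, lbl A = 1 ∨ lbl A = -1)
    (𝒜 : Set (E d))
    -- margin assumption (the `ℓ₂`-norm is self-dual)
    (ystar : E d) (bstar dstar : ℝ)
    (hystar : ystar ≠ 0) (hdstar : 0 < dstar)
    (hsep : ∀ A ∈ 𝒜, dstar * ‖ystar‖ ≤ lbl A * (⟪ystar, A⟫ + bstar))
    (hmax : ∀ (y : E d) (b t : ℝ), y ≠ 0 →
      (∀ A ∈ 𝒜, t * ‖y‖ ≤ lbl A * (⟪y, A⟫ + b)) → t ≤ dstar)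
    -- Algorithm 2
    (γ : ℕ → ℝ) (hγ : ∀ t, 1 ≤ t → 0 < γ t)
    (Ag : ℕ → E d) (hAg : ∀ t, 1 ≤ t → Ag t ∈ 𝒜)
    (Sp Sm : ℕ → Set (E d))
    (hS0p : (Sp 0).Finite ∧ (Sp 0).Nonempty ∧ Sp 0 ⊆ {A | A ∈ 𝒜 ∧ lbl A = 1})
    (hS0m : (Sm 0).Finite ∧ (Sm 0).Nonempty ∧ Sm 0 ⊆ {A | A ∈ 𝒜 ∧ lbl A = -1})
    (zs ys : ℕ → E d) (bs : ℕ → ℝ) (sp sm : ℕ → E d)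
    (hinit : zs 1 = ys 1 ∧ ‖ys 1‖ ≤ 1 ∧
      ∀ (y : E d) (b : ℝ), ‖y‖ ≤ 1 →
        marginFn (Sp 0) (Sm 0) y b ≤ marginFn (Sp 0) (Sm 0) (ys 1) (bs 1))
    (hupd : ∀ t, 1 ≤ t →
      (lbl (Ag t) = 1 →
        Sp t = insert (proxyE lbl c (Ag t) (ys t) (bs t)) (Sp (t - 1)) ∧
        Sm t = Sm (t - 1)) ∧
      (lbl (Ag t) = -1 →
        Sm t = insert (proxyE lbl c (Ag t) (ys t) (bs t)) (Sm (t - 1)) ∧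
        Sp t = Sp (t - 1)))
    (hsp : ∀ t, 1 ≤ t → sp t ∈ Sp t ∧ ∀ x ∈ Sp t, ⟪zs t, sp t⟫ ≤ ⟪zs t, x⟫)
    (hsm : ∀ t, 1 ≤ t → sm t ∈ Sm t ∧ ∀ x ∈ Sm t, ⟪zs t, x⟫ ≤ ⟪zs t, sm t⟫)
    (hz : ∀ t, 1 ≤ t → zs (t + 1) = projB (zs t + γ t • (sp t - sm t)))
    (hy : ∀ t, 1 ≤ t → ys (t + 1) =
      (∑ τ ∈ Finset.Icc 1 (t + 1), γ τ)⁻¹ • ∑ τ ∈ Finset.Icc 1 (t + 1), γ τ • zs τ)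
    (hb : ∀ t, 1 ≤ t → bs (t + 1) =
      -(1 / 2) * (sInf ((fun x => ⟪ys (t + 1), x⟫) '' Sp t) +
                  sSup ((fun x => ⟪ys (t + 1), x⟫) '' Sm t)))
    :
    ∀ t, 1 ≤ t →
      0 ≤ ⟪ystar, zs t⟫ ∧ 0 ≤ ⟪ystar, ys t⟫ ∧ 0 ≤ ⟪ystar, vE (ys t)⟫ := by
  
  have hns : (0:ℝ) < ‖ystar‖ := norm_pos_iff.2 hystar
  -- separation facts for the initial sets
  have hQp0 : ∀ x ∈ Sp 0, dstar * ‖ystar‖ ≤ ⟪ystar, x⟫ + bstar := by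
    intro x hx
    have h := hS0p.2.2 hx
    have h2 := hsep x h.1
    rwa [h.2, one_mul] at h2
  have hQm0 : ∀ x ∈ Sm 0, ⟪ystar, x⟫ + bstar ≤ -(dstar * ‖ystar‖) := by
    intro x hx
    have h := hS0m.2.2 hx
    have h2 := hsep x h.1
    rw [h.2] at h2
    linarith
  -- step for the sets S⁺, S⁻
  have hQstep : ∀ t, 1 ≤ t →
      (∀ x ∈ Sp (t - 1), dstar * ‖ystar‖ ≤ ⟪ystar, x⟫ + bstar) →
      (∀ x ∈ Sm (t - 1), ⟪ystar, x⟫ + bstar ≤ -(dstar * ‖ystar‖)) →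
      0 ≤ ⟪ystar, ys t⟫ →
      (∀ x ∈ Sp t, dstar * ‖ystar‖ ≤ ⟪ystar, x⟫ + bstar) ∧
      (∀ x ∈ Sm t, ⟪ystar, x⟫ + bstar ≤ -(dstar * ‖ystar‖)) := by
    intro t ht hp hm hyt
    have hv : 0 ≤ ⟪ystar, vE (ys t)⟫ := vE_inner_nonneg _ _ hyt
    rcases hlbl (Ag t) with hA | hA
    · obtain ⟨h1, h2⟩ := (hupd t ht).1 hA
      refine ⟨?_, ?_⟩
      · intro x hx
        rw [h1] at hx
        rcases Set.mem_insert_iff.1 hx with rfl | hx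
        · have hge := inner_proxy_ge lbl c ystar (Ag t) (ys t) (bs t) hv hA
          have hsepA := hsep _ (hAg t ht)
          rw [hA, one_mul] at hsepA
          linarith
        · exact hp x hx
      · intro x hx
        rw [h2] at hx
        exact hm x hx
    · obtain ⟨h1, h2⟩ := (hupd t ht).2 hA
      refine ⟨?_, ?_⟩
      · intro x hx
        rw [h2] at hx
        exact hp x hx
      · intro x hx
        rw [h1] at hx
        rcases Set.mem_insert_iff.1 hx with rfl | hx
        · have hle := inner_proxy_le lbl c ystar (Ag t) (ys t) (bs t) hv hA
          have hsepA := hsep _ (hAg t ht)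
          rw [hA] at hsepA
          linarith
        · exact hm x hx
  -- step for z
  have hZstep : ∀ t, 1 ≤ t → 0 ≤ ⟪ystar, zs t⟫ →
      (∀ x ∈ Sp t, dstar * ‖ystar‖ ≤ ⟪ystar, x⟫ + bstar) →
      (∀ x ∈ Sm t, ⟪ystar, x⟫ + bstar ≤ -(dstar * ‖ystar‖)) →
      0 ≤ ⟪ystar, zs (t + 1)⟫ := by
    intro t ht hzt hp hm
    rw [hz t ht]
    apply projB_inner_nonneg
    rw [inner_add_right, real_inner_smul_right, inner_sub_right]
    have h1 := hp _ (hsp t ht).1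
    have h2 := hm _ (hsm t ht).1
    have h3 : (0:ℝ) ≤ dstar * ‖ystar‖ := le_of_lt (mul_pos hdstar hns)
    have h4 : 0 ≤ ⟪ystar, sp t⟫ - ⟪ystar, sm t⟫ := by linarith
    have := mul_nonneg (hγ t ht).le h4
    linarith
  -- step for y
  have hYstep : ∀ t, 1 ≤ t →
      (∀ τ, 1 ≤ τ → τ ≤ t + 1 → 0 ≤ ⟪ystar, zs τ⟫) → 0 ≤ ⟪ystar, ys (t + 1)⟫ := by
    intro t ht hzall
    rw [hy t ht, real_inner_smul_right, inner_sum]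
    simp only [real_inner_smul_right]
    apply mul_nonneg
    · apply inv_nonneg.2
      apply Finset.sum_nonneg
      intro τ hτ
      exact (hγ τ (Finset.mem_Icc.1 hτ).1).le
    · apply Finset.sum_nonneg
      intro τ hτ
      obtain ⟨hτ1, hτ2⟩ := Finset.mem_Icc.1 hτ
      exact mul_nonneg (hγ τ hτ1).le (hzall τ hτ1 hτ2)
  -- base case: alignment of y₁
  have hY1 : 0 ≤ ⟪ystar, ys 1⟫ := by
    by_contra hneg
    push_neg at hneg
    set u : E d := ‖ystar‖⁻¹ • ystar with hu_def
    have hu : ‖u‖ = 1 := by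
      rw [hu_def, norm_smul, norm_inv, norm_norm, inv_mul_cancel₀ hns.ne']
    set a : ℝ := ⟪ys 1, u⟫ with ha_def
    have haneg : a < 0 := by
      rw [ha_def, hu_def, real_inner_smul_right, real_inner_comm]
      exact mul_neg_of_pos_of_neg (inv_pos.2 hns) hneg
    set ε : ℝ := -2 * a with hε_def
    have hεpos : 0 < ε := by rw [hε_def]; linarith
    set y' : E d := ys 1 + ε • u with hy'_def
    set b' : ℝ := bs 1 + ε * (‖ystar‖⁻¹ * bstar) with hb'_def
    have hnorm : ‖y'‖ ≤ 1 := by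
      have hsq : ‖y'‖ ^ 2 = ‖ys 1‖ ^ 2 + 2 * (ε * a) + ε ^ 2 := by
        rw [hy'_def, norm_add_sq_real, real_inner_smul_right, ← ha_def, norm_smul,
          hu, mul_one, Real.norm_eq_abs, sq_abs]
      have hle : ‖y'‖ ^ 2 ≤ 1 := by
        rw [hsq, hε_def]
        have h1 : ‖ys 1‖ ≤ 1 := hinit.2.1
        nlinarith [norm_nonneg (ys 1)]
      nlinarith [norm_nonneg y']
    -- pointwise improvement on S⁺
    have hptp : ∀ x ∈ Sp 0,
        ⟪ys 1, x⟫ + bs 1 + ε * dstar ≤ ⟪y', x⟫ + b' := by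
      intro x hx
      have hxs := hQp0 x hx
      have hmul : dstar ≤ ‖ystar‖⁻¹ * (⟪ystar, x⟫ + bstar) := by
        rw [le_inv_mul_iff₀ hns, mul_comm]
        exact hxs
      have hεmul := mul_le_mul_of_nonneg_left hmul hεpos.le
      have hinn : ⟪y', x⟫ = ⟪ys 1, x⟫ + ε * (‖ystar‖⁻¹ * ⟪ystar, x⟫) := by
        rw [hy'_def, inner_add_left, real_inner_smul_left, hu_def, real_inner_smul_left]
      rw [hinn, hb'_def]
      ring_nf
      ring_nf at hεmul
      linarith
    have hptm : ∀ x ∈ Sm 0,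
        -⟪ys 1, x⟫ - bs 1 + ε * dstar ≤ -⟪y', x⟫ - b' := by
      intro x hx
      have hxs := hQm0 x hx
      have hmul : dstar ≤ ‖ystar‖⁻¹ * (-(⟪ystar, x⟫ + bstar)) := by
        rw [le_inv_mul_iff₀ hns, mul_comm]
        linarith
      have hεmul := mul_le_mul_of_nonneg_left hmul hεpos.le
      have hinn : ⟪y', x⟫ = ⟪ys 1, x⟫ + ε * (‖ystar‖⁻¹ * ⟪ystar, x⟫) := by
        rw [hy'_def, inner_add_left, real_inner_smul_left, hu_def, real_inner_smul_left]
      rw [hinn, hb'_def]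
      ring_nf
      ring_nf at hεmul
      linarith
    -- improvement of the margin value
    set m : ℝ := marginFn (Sp 0) (Sm 0) (ys 1) (bs 1) with hm_def
    have hbig : m + ε * dstar ≤ marginFn (Sp 0) (Sm 0) y' b' := by
      apply le_min
      · apply le_csInf (hS0p.2.1.image _)
        rintro w ⟨x, hx, rfl⟩
        have h1 : sInf ((fun x => ⟪ys 1, x⟫ + bs 1) '' Sp 0) ≤ ⟪ys 1, x⟫ + bs 1 :=
          csInf_le (hS0p.1.image _).bddBelow ⟨x, hx, rfl⟩
        have h2 : m ≤ sInf ((fun x => ⟪ys 1, x⟫ + bs 1) '' Sp 0) := min_le_left _ _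
        have h3 := hptp x hx
        simp only []
        linarith
      · apply le_csInf (hS0m.2.1.image _)
        rintro w ⟨x, hx, rfl⟩
        have h1 : sInf ((fun x => -⟪ys 1, x⟫ - bs 1) '' Sm 0) ≤ -⟪ys 1, x⟫ - bs 1 :=
          csInf_le (hS0m.1.image _).bddBelow ⟨x, hx, rfl⟩
        have h2 : m ≤ sInf ((fun x => -⟪ys 1, x⟫ - bs 1) '' Sm 0) := min_le_right _ _
        have h3 := hptm x hx
        simp only []
        linarith
    have hopt := hinit.2.2 y' b' hnorm
    nlinarith [mul_pos hεpos hdstar]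
  have hZ1 : 0 ≤ ⟪ystar, zs 1⟫ := by rw [hinit.1]; exact hY1
  -- the main invariant, by induction
  have key : ∀ t, 1 ≤ t →
      (∀ τ, 1 ≤ τ → τ ≤ t → 0 ≤ ⟪ystar, zs τ⟫) ∧ 0 ≤ ⟪ystar, ys t⟫ ∧
      (∀ x ∈ Sp t, dstar * ‖ystar‖ ≤ ⟪ystar, x⟫ + bstar) ∧
      (∀ x ∈ Sm t, ⟪ystar, x⟫ + bstar ≤ -(dstar * ‖ystar‖)) := by
    intro t
    induction t with
    | zero => omega
    | succ n ih =>
      intro _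
      by_cases hn : 1 ≤ n
      · obtain ⟨hZ, hY, hp, hm⟩ := ih hn
        have hZ' : 0 ≤ ⟪ystar, zs (n + 1)⟫ := hZstep n hn (hZ n hn le_rfl) hp hm
        have hZall : ∀ τ, 1 ≤ τ → τ ≤ n + 1 → 0 ≤ ⟪ystar, zs τ⟫ := by
          intro τ h1 h2
          rcases Nat.lt_or_ge τ (n + 1) with h | h
          · exact hZ τ h1 (by omega)
          · have : τ = n + 1 := by omega
            subst this; exact hZ'
        have hY' := hYstep n hn hZall
        have hQ' := hQstep (n + 1) (by omega)
          (by simpa using hp) (by simpa using hm) hY'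
        exact ⟨hZall, hY', hQ'.1, hQ'.2⟩
      · have hn0 : n = 0 := by omega
        subst hn0
        have hQ1 := hQstep 1 le_rfl (by simpa using hQp0) (by simpa using hQm0) hY1
        refine ⟨?_, hY1, hQ1.1, hQ1.2⟩
        intro τ h1 h2
        have : τ = 1 := by omega
        subst this; exact hZ1
  intro t ht
  obtain ⟨hZ, hY, -, -⟩ := key t ht
  exact ⟨hZ t ht le_rfl, hY, vE_inner_nonneg _ _ hY⟩
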